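/- Let ρ = Σ_{j=1}^{n} (n−j)ε_j be the half-sum of positive roots of D_n (n ≥ 5) and λ = ε_1 + ⋯ + ε_{n−2}. Set δ = −(ε_{n−1}+ε_n) − λ + ρ. Then: (1) ⟨δ, (ε_{n−1}−ε_n)^∨⟩ ∈ ℤ_{≥0}; (2) setting δ₁ = s_{ε_{n−1}−ε_n}(δ), one has ⟨δ₁, (ε_{n−2}−ε_{n−1})^∨⟩ ∈ ℤ_{≥0}; and (3) s_{ε_{n−2}−ε_{n−1}}(δ₁) = −2ε_{n−2} − λ + ρ. That is, the sequence (ε_{n−1}−ε_n, ε_{n−2}−ε_{n−1}) links −(ε_{n−1}+ε_n) − λ + ρ to −2ε_{n−2} − λ + ρ. -/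

import Mathlib

noncomputable section

/-- The standard basis vector `ε_j` of `ℝ^n`. -/
def eps (n : ℕ) (j : Fin n) : Fin n → ℝ := Pi.single j 1

/-- The standard inner product on `ℝ^n`. -/
def ip {n : ℕ} (v w : Fin n → ℝ) : ℝ := ∑ t, v t * w t

/-- The pairing `⟨v, β^∨⟩ = 2⟨v, β⟩/⟨β, β⟩`. -/
def pairing {n : ℕ} (v β : Fin n → ℝ) : ℝ := 2 * ip v β / ip β β

/-- The reflection `s_β(v) = v - ⟨v, β^∨⟩ β`. -/
def wrefl {n : ℕ} (β v : Fin n → ℝ) : Fin n → ℝ := v - pairing v β • β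

/-- `ρ = Σ_{j=1}^{n} (n-j) ε_j`, the half sum of positive roots of `D_n` (0-based indices). -/
def rhoD (n : ℕ) : Fin n → ℝ := fun t => (n : ℝ) - 1 - (t : ℕ)

/-- `λ = ε_1 + ⋯ + ε_{n-2}`. -/
def lamD (n : ℕ) : Fin n → ℝ :=
  ∑ j ∈ Finset.univ.filter (fun j : Fin n => (j : ℕ) < n - 2), eps n j

/-! Put `μ = ρ - λ`: its coordinates at `ε_{n-2}, ε_{n-1}, ε_n` are `1, 1, 0`. Since `ε_i - ε_j` has
squared length `2`, the pairing of `v` with it is `v_i - v_j`. From `μ - ε_{n-1} - ε_n` the two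
pairings are therefore `1` and `2`, and the two reflections add `ε_n - ε_{n-1}` and then
`2ε_{n-1} - 2ε_{n-2}`, which lands on `μ - 2ε_{n-2}`. -/

section Reflection

variable {n : ℕ}

lemma ip_eps_right (v : Fin n → ℝ) (j : Fin n) : ip v (eps n j) = v j := by
  simp [ip, eps, Pi.single_apply]

lemma ip_sub_right (v w w' : Fin n → ℝ) : ip v (w - w') = ip v w - ip v w' := by
  simp [ip, mul_sub, Finset.sum_sub_distrib]

lemma pairing_eps_sub_eps (v : Fin n → ℝ) {a b : Fin n} (hab : a ≠ b) :
    pairing v (eps n a - eps n b) = v a - v b := by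
  have hnorm : ip (eps n a - eps n b) (eps n a - eps n b) = 2 := by
    rw [ip_sub_right, ip_eps_right, ip_eps_right]
    norm_num [eps, hab, hab.symm]
  rw [pairing, hnorm, ip_sub_right, ip_eps_right, ip_eps_right]
  ring

lemma links_sub_eps_add_eps (μ : Fin n → ℝ) {a b c : Fin n} (hab : a ≠ b) (hbc : b ≠ c)
    (hac : a ≠ c) (hμab : μ a = μ b) (hμbc : μ b = μ c + 1) :
    pairing (μ - (eps n b + eps n c)) (eps n b - eps n c) = 1 ∧
    pairing (wrefl (eps n b - eps n c) (μ - (eps n b + eps n c))) (eps n a - eps n b) = 2 ∧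
    wrefl (eps n a - eps n b) (wrefl (eps n b - eps n c) (μ - (eps n b + eps n c))) =
      μ - (2 : ℝ) • eps n a := by
  set δ := μ - (eps n b + eps n c) with hδ
  have h₁ : pairing δ (eps n b - eps n c) = 1 := by
    rw [pairing_eps_sub_eps δ hbc]
    simp [hδ, eps, hbc, hbc.symm, hμbc]
  have hδ₁ : wrefl (eps n b - eps n c) δ = δ - (eps n b - eps n c) := by rw [wrefl, h₁, one_smul]
  have h₂ : pairing (wrefl (eps n b - eps n c) δ) (eps n a - eps n b) = 2 := by
    rw [hδ₁, pairing_eps_sub_eps _ hab]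
    simp only [hδ, eps, Pi.sub_apply, Pi.add_apply, hμab, ne_eq, hab, hac, hbc, not_false_eq_true,
      Pi.single_eq_of_ne, Pi.single_eq_same]
    ring
  refine ⟨h₁, h₂, ?_⟩
  rw [wrefl, h₂, hδ₁, hδ]
  module

end Reflection

lemma rhoD_sub_lamD_apply (n : ℕ) (t : Fin n) :
    (rhoD n - lamD n) t = (n : ℝ) - 1 - (t : ℕ) - if (t : ℕ) < n - 2 then 1 else 0 := by
  simp [rhoD, lamD, Finset.sum_apply, eps, Pi.single_apply]

/-- In type `D_n` (`n ≥ 5`), the sequence `(ε_{n-1}-ε_n, ε_{n-2}-ε_{n-1})` links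
`-(ε_{n-1}+ε_n) - λ + ρ` to `-2ε_{n-2} - λ + ρ`. -/
theorem stmt10 (n : ℕ) (hn : 5 ≤ n) :
    (∃ m : ℕ, pairing (-(eps n ⟨n - 2, by omega⟩ + eps n ⟨n - 1, by omega⟩) - lamD n + rhoD n)
        (eps n ⟨n - 2, by omega⟩ - eps n ⟨n - 1, by omega⟩) = (m : ℝ)) ∧
    (∃ m : ℕ, pairing
        (wrefl (eps n ⟨n - 2, by omega⟩ - eps n ⟨n - 1, by omega⟩)
          (-(eps n ⟨n - 2, by omega⟩ + eps n ⟨n - 1, by omega⟩) - lamD n + rhoD n))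
        (eps n ⟨n - 3, by omega⟩ - eps n ⟨n - 2, by omega⟩) = (m : ℝ)) ∧
    wrefl (eps n ⟨n - 3, by omega⟩ - eps n ⟨n - 2, by omega⟩)
        (wrefl (eps n ⟨n - 2, by omega⟩ - eps n ⟨n - 1, by omega⟩)
          (-(eps n ⟨n - 2, by omega⟩ + eps n ⟨n - 1, by omega⟩) - lamD n + rhoD n)) =
      -((2 : ℝ) • eps n ⟨n - 3, by omega⟩) - lamD n + rhoD n := by
  have hsplit : ∀ w : Fin n → ℝ, -w - lamD n + rhoD n = (rhoD n - lamD n) - w := by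
    intro w; abel
  have hμab : (rhoD n - lamD n) ⟨n - 3, by omega⟩ = (rhoD n - lamD n) ⟨n - 2, by omega⟩ := by
    simp only [rhoD_sub_lamD_apply]
    rw [if_pos (by omega), if_neg (by omega)]
    push_cast [Nat.cast_sub (by omega : 3 ≤ n), Nat.cast_sub (by omega : 2 ≤ n)]
    ring
  have hμbc : (rhoD n - lamD n) ⟨n - 2, by omega⟩ = (rhoD n - lamD n) ⟨n - 1, by omega⟩ + 1 := by
    simp only [rhoD_sub_lamD_apply]
    rw [if_neg (by omega), if_neg (by omega)]
    push_cast [Nat.cast_sub (by omega : 2 ≤ n), Nat.cast_sub (by omega : 1 ≤ n)]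
    ring
  obtain ⟨h₁, h₂, h₃⟩ := links_sub_eps_add_eps (rhoD n - lamD n)
    (by simp only [ne_eq, Fin.ext_iff]; omega) (by simp only [ne_eq, Fin.ext_iff]; omega)
    (by simp only [ne_eq, Fin.ext_iff]; omega) hμab hμbc
  rw [hsplit, hsplit]
  exact ⟨⟨1, by rw [h₁, Nat.cast_one]⟩, ⟨2, by rw [h₂, Nat.cast_ofNat]⟩, h₃⟩
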